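/- arXiv:2212.00754 — 4 statements merged into one kernel-verified Lean document; each statement's English description precedes it below -/
import Mathlib

section
/- Let ρ > 0 and τ ∈ (0, π/2), and let f(θ) = sin 2θ + ρ sin(θ − τ). Then f has exactly one zero θ₀ in the interval [0, π/2), this zero satisfies 0 < θ₀ < τ, and f'(θ₀) > 0. -/
open Real

/-- for `ρ > 0` and `τ ∈ (0, π/2)`, the function
`f(θ) = sin 2θ + ρ sin(θ − τ)` has exactly one zero `θ₀` in `[0, π/2)`;
moreover `0 < θ₀ < τ` and `f'(θ₀) > 0`. -/
theorem unique_zero_in_first_interval (ρ τ : ℝ) (hρ : 0 < ρ)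
    (hτ : τ ∈ Set.Ioo 0 (π / 2)) (f : ℝ → ℝ)
    (hf : f = fun θ => Real.sin (2 * θ) + ρ * Real.sin (θ - τ)) :
    ∃ θ₀ : ℝ, θ₀ ∈ Set.Ico 0 (π / 2) ∧ f θ₀ = 0
      ∧ (∀ θ ∈ Set.Ico 0 (π / 2), f θ = 0 → θ = θ₀)
      ∧ 0 < θ₀ ∧ θ₀ < τ ∧ 0 < deriv f θ₀ := by
  subst hf
  obtain ⟨hτ0, hτ2⟩ := hτ
  have hπ := Real.pi_pos
  have hsinτ : 0 < Real.sin τ := Real.sin_pos_of_pos_of_lt_pi hτ0 (by linarith)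
  -- key positivity of E(x) = 2 cos 2x sin(τ-x) + sin 2x cos(τ-x)
  have key : ∀ x, 0 < x → x < τ →
      0 < 2 * Real.cos (2*x) * Real.sin (τ - x) + Real.sin (2*x) * Real.cos (τ - x) := by
    intro x hx0 hxτ
    have hsx : 0 < Real.sin x := Real.sin_pos_of_pos_of_lt_pi hx0 (by linarith)
    have hcx : 0 < Real.cos x := Real.cos_pos_of_mem_Ioo ⟨by linarith, by linarith⟩
    have hcτ : 0 < Real.cos τ := Real.cos_pos_of_mem_Ioo ⟨by linarith, by linarith⟩
    have e1 := Real.sin_two_mul x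
    have e2 := Real.cos_two_mul x
    have e3 := Real.sin_sub τ x
    have e4 := Real.cos_sub τ x
    have e5 := Real.sin_sq_add_cos_sq x
    have hiden : 2 * Real.cos (2*x) * Real.sin (τ - x) + Real.sin (2*x) * Real.cos (τ - x)
        = 2 * (Real.sin τ * (Real.cos x)^3 + Real.cos τ * (Real.sin x)^3) := by
      rw [e1, e2, e3, e4]
      linear_combination (2 * (Real.sin τ * Real.cos x - Real.cos τ * Real.sin x)) * e5
    rw [hiden]
    positivity
  set f : ℝ → ℝ := fun θ => Real.sin (2 * θ) + ρ * Real.sin (θ - τ) with hfdef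
  have hf0 : f 0 < 0 := by
    simp only [hfdef, mul_zero, Real.sin_zero, zero_add, zero_sub, Real.sin_neg]
    nlinarith
  have hfτ : 0 < f τ := by
    have : 0 < Real.sin (2 * τ) := Real.sin_pos_of_pos_of_lt_pi (by linarith) (by linarith)
    simp only [hfdef, sub_self, Real.sin_zero, mul_zero, add_zero]
    exact this
  have hfc : Continuous f := by fun_prop
  -- derivative of f
  have hfd : ∀ x, HasDerivAt f (2 * Real.cos (2*x) + ρ * Real.cos (x - τ)) x := by
    intro x
    have h1 : HasDerivAt (fun y : ℝ => Real.sin (2*y)) (Real.cos (2*x) * (2*1)) x :=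
      ((hasDerivAt_id x).const_mul 2).sin
    have h2 : HasDerivAt (fun y : ℝ => ρ * Real.sin (y - τ)) (ρ * (Real.cos (x - τ) * 1)) x :=
      (((hasDerivAt_id x).sub_const τ).sin).const_mul ρ
    have := h1.add h2
    refine HasDerivAt.congr_deriv this ?_
    ring
  -- any zero in [0, π/2) lies in (0, τ)
  have loc : ∀ θ, θ ∈ Set.Ico 0 (π/2) → f θ = 0 → 0 < θ ∧ θ < τ := by
    intro θ ⟨hθ0, hθ2⟩ hz
    constructor
    · rcases lt_or_eq_of_le hθ0 with h | h
      · exact h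
      · exfalso; rw [← h] at hz; linarith
    · by_contra hge
      push_neg at hge
      have h1 : 0 < Real.sin (2*θ) :=
        Real.sin_pos_of_pos_of_lt_pi (by linarith) (by linarith)
      have h2 : 0 ≤ Real.sin (θ - τ) :=
        Real.sin_nonneg_of_nonneg_of_le_pi (by linarith) (by linarith)
      have : 0 < f θ := by simp only [hfdef]; nlinarith
      linarith
  -- zeros in (0,τ) satisfy sin 2θ = ρ sin(τ-θ)
  have zeq : ∀ θ, f θ = 0 → Real.sin (2*θ) = ρ * Real.sin (τ - θ) := by
    intro θ hz
    have : Real.sin (θ - τ) = - Real.sin (τ - θ) := by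
      rw [← Real.sin_neg]; ring_nf
    simp only [hfdef] at hz
    rw [this] at hz; linarith
  -- uniqueness core: no two distinct zeros in (0, τ)
  have uniq : ∀ a b, 0 < a → a < b → b < τ → f a = 0 → f b = 0 → False := by
    intro a b ha0 hab hbτ hza hzb
    set g : ℝ → ℝ := fun x => Real.sin (2*x) / Real.sin (τ - x) with hgdef
    have hden : ∀ x ∈ Set.Icc a b, 0 < Real.sin (τ - x) := by
      intro x ⟨hx1, hx2⟩
      exact Real.sin_pos_of_pos_of_lt_pi (by linarith) (by linarith)
    have hgc : ContinuousOn g (Set.Icc a b) := by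
      apply ContinuousOn.div
      · fun_prop
      · fun_prop
      · intro x hx; exact ne_of_gt (hden x hx)
    set D : ℝ → ℝ := fun x =>
      (Real.cos (2*x) * (2*1) * Real.sin (τ - x) - Real.sin (2*x) * (Real.cos (τ - x) * (-1)))
        / (Real.sin (τ - x))^2 with hDdef
    have hgd : ∀ x ∈ Set.Ioo a b, HasDerivAt g (D x) x := by
      intro x hx
      have hdx : Real.sin (τ - x) ≠ 0 :=
        ne_of_gt (hden x ⟨le_of_lt hx.1, le_of_lt hx.2⟩)
      have h1 : HasDerivAt (fun y : ℝ => Real.sin (2*y)) (Real.cos (2*x) * (2*1)) x :=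
        ((hasDerivAt_id x).const_mul 2).sin
      have h2 : HasDerivAt (fun y : ℝ => Real.sin (τ - y)) (Real.cos (τ - x) * (-1)) x :=
        ((hasDerivAt_id x).const_sub τ).sin
      exact h1.div h2 hdx
    obtain ⟨c, hc, hceq⟩ := exists_hasDerivAt_eq_slope g D hab hgc hgd
    have hga : g a = ρ := by
      have := zeq a hza
      have hda : Real.sin (τ - a) ≠ 0 := ne_of_gt (hden a ⟨le_refl a, le_of_lt hab⟩)
      simp only [hgdef]; rw [this]; field_simp
    have hgb : g b = ρ := by
      have := zeq b hzb
      have hdb : Real.sin (τ - b) ≠ 0 := ne_of_gt (hden b ⟨le_of_lt hab, le_refl b⟩)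
      simp only [hgdef]; rw [this]; field_simp
    have hD0 : D c = 0 := by rw [hceq, hga, hgb]; simp
    have hcpos : 0 < D c := by
      have hE := key c (by linarith [hc.1]) (by linarith [hc.2])
      have hdenc : 0 < Real.sin (τ - c) :=
        hden c ⟨le_of_lt hc.1, le_of_lt hc.2⟩
      have : 0 < (Real.sin (τ - c))^2 := by positivity
      rw [hDdef]
      have hnum : 0 < Real.cos (2*c) * (2*1) * Real.sin (τ - c)
          - Real.sin (2*c) * (Real.cos (τ - c) * (-1)) := by nlinarith
      positivity
    linarith
  -- existence via IVT
  have hIVT : (0:ℝ) ∈ f '' Set.Ioo 0 τ := by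
    apply intermediate_value_Ioo (le_of_lt hτ0) hfc.continuousOn
    exact ⟨hf0, hfτ⟩
  obtain ⟨θ₀, hθ₀mem, hθ₀z⟩ := hIVT
  obtain ⟨hθ₀0, hθ₀τ⟩ := hθ₀mem
  refine ⟨θ₀, ⟨le_of_lt hθ₀0, by linarith⟩, hθ₀z, ?_, hθ₀0, hθ₀τ, ?_⟩
  · intro θ hθ hz
    obtain ⟨hθ0, hθτ⟩ := loc θ hθ hz
    rcases lt_trichotomy θ θ₀ with h | h | h
    · exact absurd (uniq θ θ₀ hθ0 h hθ₀τ hz hθ₀z) (fun x => x)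
    · exact h
    · exact absurd (uniq θ₀ θ hθ₀0 h hθτ hθ₀z hz) (fun x => x)
  · rw [(hfd θ₀).deriv]
    have hE := key θ₀ hθ₀0 hθ₀τ
    have hden : 0 < Real.sin (τ - θ₀) :=
      Real.sin_pos_of_pos_of_lt_pi (by linarith) (by linarith)
    have hzq := zeq θ₀ hθ₀z
    have hcos : Real.cos (θ₀ - τ) = Real.cos (τ - θ₀) := by
      rw [← Real.cos_neg]; ring_nf
    rw [hcos]
    have h2 : Real.sin (2*θ₀) * Real.cos (τ - θ₀)
        = ρ * Real.sin (τ - θ₀) * Real.cos (τ - θ₀) := by rw [hzq]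
    by_contra hle
    push_neg at hle
    nlinarith [mul_nonneg hden.le (neg_nonneg.mpr hle)]
end

section
/- Let ρ > 0 and τ ∈ (0, π/2), and define p(θ) = cos 2θ + 2ρ cos(θ − τ). Then: (a) for every θ ∈ [0, π/2], p(θ) > p(θ + π); (b) for every θ ∈ [π/2, π), p(θ) > p(2π − θ); (c) for every θ ∈ (3π/2, 2π], p(θ) > p(3π − θ). Consequently, every global minimum point of p on [0, 2π] lies in [π, 3π/2]. -/
open Real Set

/-!
Expanding `cos (θ - τ)` writes `p θ = cos 2θ + a cos θ + b sin θ` with `a = 2ρ cos τ > 0` and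
`b = 2ρ sin τ > 0`. The three reflections `θ ↦ θ + π`, `θ ↦ 2π - θ`, `θ ↦ 3π - θ` fix `cos 2θ` and
change `p` by `2 (a cos θ + b sin θ)`, `2 b sin θ` and `2 a cos θ` respectively, each positive on
the corresponding range. So every point of `[0, 2π]` outside `[π, 3π/2]` is strictly beaten by its
mirror image, which again lies in `[0, 2π]`.
-/

noncomputable def trigPoly (a b θ : ℝ) : ℝ := cos (2 * θ) + a * cos θ + b * sin θ

lemma trigPoly_eq_cos_two_mul_add_cos_sub (ρ τ : ℝ) :
    trigPoly (2 * ρ * cos τ) (2 * ρ * sin τ) = fun θ => cos (2 * θ) + 2 * ρ * cos (θ - τ) := by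
  ext θ
  rw [trigPoly, cos_sub]
  ring

section Reflections

variable (a b θ : ℝ)

lemma trigPoly_sub_trigPoly_add_pi :
    trigPoly a b θ - trigPoly a b (θ + π) = 2 * (a * cos θ + b * sin θ) := by
  simp only [trigPoly, mul_add, cos_add_two_pi, cos_add_pi, sin_add_pi]
  ring

lemma trigPoly_nat_mul_pi_sub (n : ℕ) :
    trigPoly a b (n * π - θ) = cos (2 * θ) + (-1) ^ n * (a * cos θ - b * sin θ) := by
  have h : 2 * (n * π - θ) = ((2 * n : ℕ) : ℝ) * π - 2 * θ := by push_cast; ring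
  rw [trigPoly, h, cos_nat_mul_pi_sub, cos_nat_mul_pi_sub, sin_nat_mul_pi_sub, pow_mul]
  norm_num
  ring

lemma trigPoly_sub_trigPoly_two_pi_sub :
    trigPoly a b θ - trigPoly a b (2 * π - θ) = 2 * b * sin θ := by
  have := trigPoly_nat_mul_pi_sub a b θ 2
  norm_num at this
  rw [this, trigPoly]
  ring

lemma trigPoly_sub_trigPoly_three_pi_sub :
    trigPoly a b θ - trigPoly a b (3 * π - θ) = 2 * a * cos θ := by
  have := trigPoly_nat_mul_pi_sub a b θ 3
  norm_num at this
  rw [this, trigPoly]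
  ring

end Reflections

section Positivity

variable {a b θ : ℝ}

lemma trigPoly_add_pi_lt (ha : 0 < a) (hb : 0 < b) (hθ : θ ∈ Icc 0 (π / 2)) :
    trigPoly a b (θ + π) < trigPoly a b θ := by
  have hpos : 0 < a * cos θ + b * sin θ := by
    rcases hθ.2.lt_or_eq with hlt | rfl
    · have hcos := cos_pos_of_mem_Ioo ⟨by linarith [pi_pos, hθ.1], hlt⟩
      have hsin := sin_nonneg_of_nonneg_of_le_pi hθ.1 (by linarith [pi_pos])
      exact add_pos_of_pos_of_nonneg (mul_pos ha hcos) (mul_nonneg hb.le hsin)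
    · simpa using hb
  linarith [trigPoly_sub_trigPoly_add_pi a b θ]

lemma trigPoly_two_pi_sub_lt (hb : 0 < b) (hθ : θ ∈ Ioo 0 π) :
    trigPoly a b (2 * π - θ) < trigPoly a b θ := by
  have := mul_pos hb (sin_pos_of_pos_of_lt_pi hθ.1 hθ.2)
  linarith [trigPoly_sub_trigPoly_two_pi_sub a b θ]

lemma trigPoly_three_pi_sub_lt (ha : 0 < a) (hθ : 0 < cos θ) :
    trigPoly a b (3 * π - θ) < trigPoly a b θ := by
  have := mul_pos ha hθ
  linarith [trigPoly_sub_trigPoly_three_pi_sub a b θ]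

end Positivity

lemma cos_pos_of_mem_Ioc_three_pi_div_two {θ : ℝ} (hθ : θ ∈ Ioc (3 * π / 2) (2 * π)) :
    0 < cos θ := by
  rw [← cos_sub_two_pi]
  exact cos_pos_of_mem_Ioo ⟨by linarith [hθ.1], by linarith [pi_pos, hθ.2]⟩

lemma mem_Icc_pi_of_isMinOn {P : ℝ → ℝ}
    (hP₁ : ∀ θ ∈ Icc (0 : ℝ) (π / 2), P (θ + π) < P θ)
    (hP₂ : ∀ θ ∈ Ico (π / 2) π, P (2 * π - θ) < P θ)
    (hP₃ : ∀ θ ∈ Ioc (3 * π / 2) (2 * π), P (3 * π - θ) < P θ)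
    {θm : ℝ} (hθm : θm ∈ Icc 0 (2 * π)) (hmin : IsMinOn P (Icc 0 (2 * π)) θm) :
    θm ∈ Icc π (3 * π / 2) := by
  have hπ := pi_pos
  obtain ⟨h0, h2π⟩ := hθm
  refine ⟨le_of_not_gt fun hlt => ?_, le_of_not_gt fun hgt => ?_⟩
  · rcases le_or_gt θm (π / 2) with hle | hgt
    · exact (hP₁ θm ⟨h0, hle⟩).not_ge (hmin ⟨by linarith, by linarith⟩)
    · exact (hP₂ θm ⟨hgt.le, hlt⟩).not_ge (hmin ⟨by linarith, by linarith⟩)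
  · exact (hP₃ θm ⟨hgt, h2π⟩).not_ge (hmin ⟨by linarith, by linarith⟩)

/-- symmetry inequalities for `p(θ) = cos 2θ + 2ρ cos(θ − τ)` with
`ρ > 0`, `τ ∈ (0, π/2)`, localizing any global minimum point on `[0, 2π]`
to the interval `[π, 3π/2]`. -/
theorem min_point_localization (ρ τ : ℝ) (hρ : 0 < ρ) (hτ : τ ∈ Set.Ioo 0 (π / 2))
    (P : ℝ → ℝ) (hP : P = fun θ => Real.cos (2 * θ) + 2 * ρ * Real.cos (θ - τ)) :
    (∀ θ ∈ Set.Icc (0 : ℝ) (π / 2), P (θ + π) < P θ)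
    ∧ (∀ θ ∈ Set.Ico (π / 2) π, P (2 * π - θ) < P θ)
    ∧ (∀ θ ∈ Set.Ioc (3 * π / 2) (2 * π), P (3 * π - θ) < P θ)
    ∧ (∀ θm ∈ Set.Icc (0 : ℝ) (2 * π),
        (∀ θ ∈ Set.Icc (0 : ℝ) (2 * π), P θm ≤ P θ) →
          θm ∈ Set.Icc π (3 * π / 2)) := by
  have ha : 0 < 2 * ρ * cos τ :=
    mul_pos (by positivity) (cos_pos_of_mem_Ioo ⟨by linarith [pi_pos, hτ.1], hτ.2⟩)
  have hb : 0 < 2 * ρ * sin τ :=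
    mul_pos (by positivity) (sin_pos_of_pos_of_lt_pi hτ.1 (by linarith [pi_pos, hτ.2]))
  rw [hP, ← trigPoly_eq_cos_two_mul_add_cos_sub]
  set p := trigPoly (2 * ρ * cos τ) (2 * ρ * sin τ)
  have h₁ : ∀ θ ∈ Icc (0 : ℝ) (π / 2), p (θ + π) < p θ := fun θ hθ =>
    trigPoly_add_pi_lt ha hb hθ
  have h₂ : ∀ θ ∈ Ico (π / 2) π, p (2 * π - θ) < p θ := fun θ hθ =>
    trigPoly_two_pi_sub_lt hb ⟨by linarith [pi_pos, hθ.1], hθ.2⟩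
  have h₃ : ∀ θ ∈ Ioc (3 * π / 2) (2 * π), p (3 * π - θ) < p θ := fun θ hθ =>
    trigPoly_three_pi_sub_lt ha (cos_pos_of_mem_Ioc_three_pi_div_two hθ)
  exact ⟨h₁, h₂, h₃, fun θm hθm hmin => mem_Icc_pi_of_isMinOn h₁ h₂ h₃ hθm hmin⟩
end

section
/- Let α₁, α₂, r ∈ ℝ with α₂ ≥ 0. Define g(z₁, z₂) = α₁|z₁² + z₂²|² + α₂|z₁² − z₂²|² − 4α₂|z₁|²|z₂|² + (2α₁ + r)(|z₁|² + |z₂|²)² for (z₁, z₂) ∈ ℂ². Then the minimum of g over the unit sphere {|z₁|² + |z₂|² = 1} equals min(3α₁ − α₂ + r, 2α₁ + r); equivalently, it equals min(α₁, α₂) + 2α₁ − α₂ + r. -/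
open Complex

lemma para_NLS3 (u v : ℂ) : ‖u + v‖ ^ 2 + ‖u - v‖ ^ 2
    = 2 * ‖u‖ ^ 2 + 2 * ‖v‖ ^ 2 := by
  simp only [Complex.sq_norm, Complex.normSq_apply, Complex.add_re, Complex.add_im,
    Complex.sub_re, Complex.sub_im]
  ring

lemma key_NLS3 (u v : ℂ) : ‖u‖ - ‖v‖ ≤ ‖u + v‖ := by
  have h1 : u = (u + v) + (-v) := by ring
  calc ‖u‖ - ‖v‖
      = ‖(u + v) + -v‖ - ‖v‖ := by rw [← h1]
    _ ≤ (‖u + v‖ + ‖-v‖) - ‖v‖ := by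
        linarith [norm_add_le (u + v) (-v)]
    _ = ‖u + v‖ := by rw [norm_neg]; ring

/-- the minimum over the unit sphere of `ℂ²` of
`g(z₁,z₂) = α₁|z₁²+z₂²|² + α₂|z₁²−z₂²|² − 4α₂|z₁|²|z₂|² + (2α₁+r)(|z₁|²+|z₂|²)²`
equals `min(3α₁ − α₂ + r, 2α₁ + r) = min(α₁, α₂) + 2α₁ − α₂ + r`. -/
theorem gmin_NLS3 (α₁ α₂ r : ℝ) (hα₂ : 0 ≤ α₂) :
    IsLeast {x : ℝ | ∃ z₁ z₂ : ℂ, ‖z₁‖ ^ 2 + ‖z₂‖ ^ 2 = 1 ∧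
        x = α₁ * ‖z₁ ^ 2 + z₂ ^ 2‖ ^ 2
            + α₂ * ‖z₁ ^ 2 - z₂ ^ 2‖ ^ 2
            - 4 * α₂ * ‖z₁‖ ^ 2 * ‖z₂‖ ^ 2
            + (2 * α₁ + r) * (‖z₁‖ ^ 2 + ‖z₂‖ ^ 2) ^ 2}
      (min (3 * α₁ - α₂ + r) (2 * α₁ + r))
    ∧ min (3 * α₁ - α₂ + r) (2 * α₁ + r) = min α₁ α₂ + 2 * α₁ - α₂ + r := by
  have hc : ((Real.sqrt 2)⁻¹ : ℝ) ^ 2 = 1 / 2 := by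
    rw [inv_pow, Real.sq_sqrt (by norm_num : (0:ℝ) ≤ 2)]; norm_num
  set c : ℂ := (((Real.sqrt 2)⁻¹ : ℝ) : ℂ) with hc_def
  have habs_c : ‖c‖ ^ 2 = 1 / 2 := by
    rw [hc_def, Complex.norm_real, Real.norm_eq_abs, _root_.sq_abs, hc]
  have hcsq : c ^ 2 = (1 / 2 : ℂ) := by
    rw [hc_def, ← Complex.ofReal_pow, hc]; norm_num
  refine ⟨⟨?_, ?_⟩, ?_⟩
  · rcases le_total α₁ α₂ with h | h
    · rw [min_eq_left (by linarith)]
      refine ⟨c, c, by rw [habs_c]; norm_num, ?_⟩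
      rw [habs_c, hcsq]
      norm_num <;> linarith
    · rw [min_eq_right (by linarith)]
      refine ⟨c, Complex.I * c, ?_, ?_⟩ <;>
        simp only [mul_pow, Complex.I_sq, norm_mul, Complex.norm_I, hcsq, habs_c,
          one_pow, one_mul, neg_mul, neg_one_mul] <;>
        norm_num <;> linarith
  · rintro x ⟨z₁, z₂, h1, rfl⟩
    set s2 := ‖z₁‖ ^ 2 with hs2def
    set t2 := ‖z₂‖ ^ 2 with ht2def
    have hs2 : 0 ≤ s2 := sq_nonneg _
    have ht2 : 0 ≤ t2 := sq_nonneg _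
    have hAnn : 0 ≤ ‖z₁ ^ 2 + z₂ ^ 2‖ := norm_nonneg _
    have hA1 : ‖z₁ ^ 2 + z₂ ^ 2‖ ≤ 1 := by
      have h := norm_add_le (z₁ ^ 2) (z₂ ^ 2)
      rw [norm_pow, norm_pow, ← hs2def, ← ht2def] at h
      linarith
    have hA2 : s2 - t2 ≤ ‖z₁ ^ 2 + z₂ ^ 2‖ := by
      have h := key_NLS3 (z₁ ^ 2) (z₂ ^ 2)
      rw [norm_pow, norm_pow, ← hs2def, ← ht2def] at h
      linarith
    have hA3 : t2 - s2 ≤ ‖z₁ ^ 2 + z₂ ^ 2‖ := by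
      have h := key_NLS3 (z₂ ^ 2) (z₁ ^ 2)
      rw [norm_pow, norm_pow, ← hs2def, ← ht2def, add_comm (z₂ ^ 2) (z₁ ^ 2)] at h
      linarith
    have hAsq : (s2 - t2) ^ 2 ≤ ‖z₁ ^ 2 + z₂ ^ 2‖ ^ 2 :=
      sq_le_sq' (by linarith) hA2
    have hAle : ‖z₁ ^ 2 + z₂ ^ 2‖ ^ 2 ≤ 1 := by nlinarith
    have hB : ‖z₁ ^ 2 - z₂ ^ 2‖ ^ 2
        = 2 * s2 ^ 2 + 2 * t2 ^ 2 - ‖z₁ ^ 2 + z₂ ^ 2‖ ^ 2 := by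
      have h := para_NLS3 (z₁ ^ 2) (z₂ ^ 2)
      rw [norm_pow, norm_pow, ← hs2def, ← ht2def] at h
      linarith
    set A := ‖z₁ ^ 2 + z₂ ^ 2‖ ^ 2 with hAdef
    rw [hB, h1]
    rcases le_total α₁ α₂ with h | h
    · calc min (3 * α₁ - α₂ + r) (2 * α₁ + r) ≤ 3 * α₁ - α₂ + r := min_le_left _ _
        _ ≤ _ := by nlinarith [mul_nonneg (sub_nonneg.2 h) (sub_nonneg.2 hAle),
            mul_nonneg hα₂ (sq_nonneg (s2 - t2))]
    · calc min (3 * α₁ - α₂ + r) (2 * α₁ + r) ≤ 2 * α₁ + r := min_le_right _ _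
        _ ≤ _ := by nlinarith [mul_nonneg (sub_nonneg.2 h) (sub_nonneg.2 hAsq),
            mul_nonneg (by linarith : (0:ℝ) ≤ α₁ + α₂) (sq_nonneg (s2 - t2))]
  · rcases le_total α₁ α₂ with h | h
    · rw [min_eq_left (by linarith), min_eq_left h]; ring
    · rw [min_eq_right (by linarith), min_eq_right h]; ring
end

section
/- Let α₁, α₂, α₃, r ∈ ℝ with α₂ ≥ 0 and α₃ > 0, and let g(z₁,z₂) = α₁|z₁²+z₂²|² + α₂|z₁²−z₂²|² − 4α₂|z₁|²|z₂|² + 2α₃(|z₁|⁴ − |z₂|⁴) + (2α₁+r)(|z₁|²+|z₂|²)². Set ᾱ = max(α₁+α₂, 2α₂). Then the minimum of g over the unit sphere {|z₁|²+|z₂|²=1} of ℂ² equals −α₃²/max(ᾱ, α₃) + 3α₁ + α₂ − max(ᾱ, α₃) + r. -/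
open Complex

lemma aux1 (A c s : ℝ) (hc : 0 < c) (h1 : -1 ≤ s) (h2 : s ≤ 1) :
    -(c^2)/max A c - max A c ≤ A*s^2 + 2*c*s - A := by
  rcases le_total A c with h | h
  · rw [max_eq_right h]
    have hcc : -(c^2)/c = -c := by field_simp
    rw [hcc]
    have h4 : 0 ≤ A*(s-1)+2*c := by
      rcases le_total 0 A with hA | hA
      · nlinarith
      · nlinarith
    nlinarith [mul_nonneg (by linarith : (0:ℝ) ≤ s+1) h4]
  · rw [max_eq_left h]
    have hA : 0 < A := lt_of_lt_of_le hc h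
    rw [show -(c^2)/A - A = (-(c^2) - A*A)/A by field_simp, div_le_iff₀ hA]
    nlinarith [sq_nonneg (A*s+c)]

lemma aux2 (A c : ℝ) (hc : 0 < c) :
    A * (c / max A c)^2 - 2*c*(c / max A c) = -(c^2)/(max A c) - max A c + A := by
  rcases le_total A c with h | h
  · rw [max_eq_right h]
    field_simp
    ring
  · rw [max_eq_left h]
    have hA : 0 < A := lt_of_lt_of_le hc h
    field_simp
    ring

lemma aux3 (A c C : ℝ) (hc : 0 < c) (t : ℝ) (ht : 2*t - 1 = -(c/max A c)) :
    -(c^2)/max A c + C - max A c = A*(2*t-1)^2 + 2*c*(2*t-1) + C - A := by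
  rw [ht]
  linear_combination - aux2 A c hc

lemma lower (α₁ α₂ α₃ r t u p : ℝ) (hα₃ : 0 < α₃) (ht : 0 ≤ t) (hu : 0 ≤ u)
    (htu : t + u = 1) (hp : |p| ≤ t*u) :
    -(α₃^2)/max (max (α₁+α₂) (2*α₂)) α₃ + 3*α₁ + α₂ - max (max (α₁+α₂) (2*α₂)) α₃ + r ≤
    α₁*(t^2+u^2+2*p) + α₂*(t^2+u^2-2*p) - 4*α₂*t*u + 2*α₃*(t^2-u^2) + (2*α₁+r)*(t+u)^2 := by
  have hu' : u = 1 - t := by linarith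
  subst hu'
  obtain ⟨hp1, hp2⟩ := abs_le.mp hp
  have key := aux1 (max (α₁+α₂) (2*α₂)) α₃ (t-(1-t)) hα₃ (by linarith) (by linarith)
  rcases le_total α₂ α₁ with h | h
  · rw [max_eq_left (by linarith : 2*α₂ ≤ α₁+α₂)] at key ⊢
    nlinarith [mul_nonneg (by linarith : (0:ℝ) ≤ α₁ - α₂) (by linarith : 0 ≤ p + t*(1-t))]
  · rw [max_eq_right (by linarith : α₁+α₂ ≤ 2*α₂)] at key ⊢
    nlinarith [mul_nonneg (by linarith : (0:ℝ) ≤ α₂ - α₁) (by linarith : 0 ≤ t*(1-t) - p)]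

/-- the minimum over the unit sphere of `ℂ²` of the (NLS4) potential
`g(z₁,z₂) = α₁|z₁²+z₂²|² + α₂|z₁²−z₂²|² − 4α₂|z₁|²|z₂|² + 2α₃(|z₁|⁴−|z₂|⁴)
+ (2α₁+r)(|z₁|²+|z₂|²)²` equals
`−α₃²/max(ᾱ,α₃) + 3α₁ + α₂ − max(ᾱ,α₃) + r` with `ᾱ = max(α₁+α₂, 2α₂)`. -/
theorem gmin_NLS4 (α₁ α₂ α₃ r : ℝ) (hα₂ : 0 ≤ α₂) (hα₃ : 0 < α₃) :
    IsLeast {x : ℝ | ∃ z₁ z₂ : ℂ, ‖z₁‖ ^ 2 + ‖z₂‖ ^ 2 = 1 ∧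
        x = α₁ * ‖z₁ ^ 2 + z₂ ^ 2‖ ^ 2
            + α₂ * ‖z₁ ^ 2 - z₂ ^ 2‖ ^ 2
            - 4 * α₂ * ‖z₁‖ ^ 2 * ‖z₂‖ ^ 2
            + 2 * α₃ * (‖z₁‖ ^ 4 - ‖z₂‖ ^ 4)
            + (2 * α₁ + r) * (‖z₁‖ ^ 2 + ‖z₂‖ ^ 2) ^ 2}
      (-(α₃ ^ 2) / max (max (α₁ + α₂) (2 * α₂)) α₃
        + 3 * α₁ + α₂ - max (max (α₁ + α₂) (2 * α₂)) α₃ + r) := by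
  constructor
  · -- membership: exhibit a minimizer
    rcases le_total α₂ α₁ with hc | hc
    · -- case α₂ ≤ α₁ : ᾱ = α₁ + α₂, z₂ gets a phase i
      have hMM : max (max (α₁ + α₂) (2 * α₂)) α₃ = max (α₁ + α₂) α₃ := by
        rw [max_eq_left (by linarith : 2*α₂ ≤ α₁+α₂)]
      rw [Set.mem_setOf_eq, hMM]
      set M := max (α₁ + α₂) α₃ with hMdef
      have hMα₃ : α₃ ≤ M := le_max_right _ _
      have hM : 0 < M := lt_of_lt_of_le hα₃ hMα₃
      set t : ℝ := (M - α₃) / (2*M) with htdef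
      have ht0 : 0 ≤ t := div_nonneg (by linarith) (by linarith)
      have ht1 : t ≤ 1 := by rw [div_le_one (by linarith)]; linarith
      have hst : 2*t - 1 = -(α₃/M) := by rw [htdef]; field_simp; ring
      set a := Real.sqrt t with hadef
      set b := Real.sqrt (1 - t) with hbdef
      have ha2 : a^2 = t := Real.sq_sqrt ht0
      have hb2 : b^2 = 1 - t := Real.sq_sqrt (by linarith)
      have ha0 : 0 ≤ a := Real.sqrt_nonneg _
      have hb0 : 0 ≤ b := Real.sqrt_nonneg _
      refine ⟨(a:ℂ), (b:ℂ)*Complex.I, ?_, ?_⟩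
      · rw [norm_mul, Complex.norm_I, Complex.norm_real, Real.norm_eq_abs, Complex.norm_real, Real.norm_eq_abs,
          _root_.abs_of_nonneg ha0, _root_.abs_of_nonneg hb0, mul_one, ha2, hb2]
        ring
      · have e1 : (a:ℂ)^2 + ((b:ℂ)*Complex.I)^2 = ((a^2 - b^2 : ℝ) : ℂ) := by
          rw [mul_pow, Complex.I_sq]; push_cast; ring
        have e2 : (a:ℂ)^2 - ((b:ℂ)*Complex.I)^2 = ((a^2 + b^2 : ℝ) : ℂ) := by
          rw [mul_pow, Complex.I_sq]; push_cast; ring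
        have e4a : ‖(a:ℂ)‖ = a := by rw [Complex.norm_real, Real.norm_eq_abs, _root_.abs_of_nonneg ha0]
        have e4b : ‖(b:ℂ)*Complex.I‖ = b := by
          rw [norm_mul, Complex.norm_I, Complex.norm_real, Real.norm_eq_abs, _root_.abs_of_nonneg hb0, mul_one]
        rw [e1, e2, e4a, e4b, Complex.norm_real, Real.norm_eq_abs, Complex.norm_real, Real.norm_eq_abs, _root_.sq_abs, _root_.sq_abs]
        have key := aux3 (α₁+α₂) α₃ (3*α₁+α₂+r) hα₃ t (by rw [← hMdef]; exact hst)
        rw [← hMdef] at key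
        have h4a : a^4 = t^2 := by rw [show a^4 = (a^2)^2 by ring, ha2]
        have h4b : b^4 = (1-t)^2 := by rw [show b^4 = (b^2)^2 by ring, hb2]
        rw [h4a, h4b, ha2, hb2]
        linear_combination key
    · -- case α₁ ≤ α₂ : ᾱ = 2α₂, real witnesses
      have hMM : max (max (α₁ + α₂) (2 * α₂)) α₃ = max (2*α₂) α₃ := by
        rw [max_eq_right (by linarith : α₁+α₂ ≤ 2*α₂)]
      rw [Set.mem_setOf_eq, hMM]
      set M := max (2*α₂) α₃ with hMdef
      have hMα₃ : α₃ ≤ M := le_max_right _ _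
      have hM : 0 < M := lt_of_lt_of_le hα₃ hMα₃
      set t : ℝ := (M - α₃) / (2*M) with htdef
      have ht0 : 0 ≤ t := div_nonneg (by linarith) (by linarith)
      have ht1 : t ≤ 1 := by rw [div_le_one (by linarith)]; linarith
      have hst : 2*t - 1 = -(α₃/M) := by rw [htdef]; field_simp; ring
      set a := Real.sqrt t with hadef
      set b := Real.sqrt (1 - t) with hbdef
      have ha2 : a^2 = t := Real.sq_sqrt ht0
      have hb2 : b^2 = 1 - t := Real.sq_sqrt (by linarith)
      have ha0 : 0 ≤ a := Real.sqrt_nonneg _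
      have hb0 : 0 ≤ b := Real.sqrt_nonneg _
      refine ⟨(a:ℂ), (b:ℂ), ?_, ?_⟩
      · rw [Complex.norm_real, Real.norm_eq_abs, Complex.norm_real, Real.norm_eq_abs, _root_.abs_of_nonneg ha0, _root_.abs_of_nonneg hb0,
          ha2, hb2]
        ring
      · have e1 : (a:ℂ)^2 + (b:ℂ)^2 = ((a^2 + b^2 : ℝ) : ℂ) := by push_cast; ring
        have e2 : (a:ℂ)^2 - (b:ℂ)^2 = ((a^2 - b^2 : ℝ) : ℂ) := by push_cast; ring
        rw [e1, e2, Complex.norm_real, Real.norm_eq_abs, Complex.norm_real, Real.norm_eq_abs, Complex.norm_real, Real.norm_eq_abs,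
          Complex.norm_real, Real.norm_eq_abs, _root_.sq_abs, _root_.sq_abs, _root_.abs_of_nonneg ha0, _root_.abs_of_nonneg hb0]
        have key := aux3 (2*α₂) α₃ (3*α₁+α₂+r) hα₃ t (by rw [← hMdef]; exact hst)
        rw [← hMdef] at key
        have h4a : a^4 = t^2 := by rw [show a^4 = (a^2)^2 by ring, ha2]
        have h4b : b^4 = (1-t)^2 := by rw [show b^4 = (b^2)^2 by ring, hb2]
        rw [h4a, h4b, ha2, hb2]
        linear_combination key
  · -- lower bound
    rintro x ⟨z₁, z₂, hz, rfl⟩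
    have e1 : ‖z₁^2+z₂^2‖^2
        = (‖z₁‖^2)^2 + (‖z₂‖^2)^2
          + 2*(z₁^2 * starRingEnd ℂ (z₂^2)).re := by
      rw [Complex.sq_norm, Complex.normSq_add, map_pow, map_pow,
        ← Complex.sq_norm z₁, ← Complex.sq_norm z₂]
    have e2 : ‖z₁^2-z₂^2‖^2
        = (‖z₁‖^2)^2 + (‖z₂‖^2)^2
          - 2*(z₁^2 * starRingEnd ℂ (z₂^2)).re := by
      rw [Complex.sq_norm, Complex.normSq_sub, map_pow, map_pow,
        ← Complex.sq_norm z₁, ← Complex.sq_norm z₂]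
    have hp : |(z₁^2 * starRingEnd ℂ (z₂^2)).re|
        ≤ (‖z₁‖^2)*(‖z₂‖^2) := by
      calc |(z₁^2 * starRingEnd ℂ (z₂^2)).re| ≤ ‖z₁^2 * starRingEnd ℂ (z₂^2)‖ :=
            Complex.abs_re_le_norm _
        _ = (‖z₁‖^2)*(‖z₂‖^2) := by
            rw [norm_mul, Complex.norm_conj, norm_pow, norm_pow]
    have key := lower α₁ α₂ α₃ r (‖z₁‖^2) (‖z₂‖^2)
      ((z₁^2 * starRingEnd ℂ (z₂^2)).re) hα₃ (by positivity) (by positivity) hz hp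
    rw [e1, e2]
    have h4a : ‖z₁‖^4 = (‖z₁‖^2)^2 := by ring
    have h4b : ‖z₂‖^4 = (‖z₂‖^2)^2 := by ring
    rw [h4a, h4b]
    linarith [key]
end
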